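/- arXiv:1410.4954 — 2 statements merged into one kernel-verified Lean document; each statement's English description precedes it below -/
import Mathlib

section
/- Let k=2^n and π_n the bit-reversal permutation on n bits. For any integer b, ∑_{j=0}^{k/2−1} saw((π_n(j)±b)/k) = 0. -/
open Classical in
/-- The saw-tooth function `saw x = x - ⌊x⌋ - 1/2 + δ(x)/2`, where `δ(x) = 1` iff `x ∈ ℤ`. -/
noncomputable def saw (x : ℝ) : ℝ :=
  x - Int.floor x - 1/2 + (if ∃ m : ℤ, (m : ℝ) = x then (1:ℝ)/2 else 0)

/-- The bit-reversal permutation on `n` bits: reverses the binary digits of `j`. -/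
def bitrev (n j : ℕ) : ℕ := ∑ i ∈ Finset.range n, (j / 2 ^ i % 2) * 2 ^ (n - 1 - i)

/-!
For `j < k / 2` the top bit of `j` vanishes, so `π_n(j) = 2 π_{n-1}(j)`; as `j` runs over
`[0, k / 2)` these are the even numbers `2t`, `t < K = k / 2`. The sum thus equals
`∑_{t<K} saw((±b/2 + t)/K)`, which by the distribution relation
`∑_{t<K} saw((x + t)/K) = saw x` is `saw(±b/2) = 0`, because `saw` vanishes on `ℤ/2`.
-/

open Finset

theorem saw_periodic : Function.Periodic saw 1 := by
  intro x
  have hint : (∃ m : ℤ, (m : ℝ) = x + 1) ↔ ∃ m : ℤ, (m : ℝ) = x :=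
    ⟨fun ⟨m, hm⟩ => ⟨m - 1, by push_cast; linarith⟩,
      fun ⟨m, hm⟩ => ⟨m + 1, by push_cast; linarith⟩⟩
  rw [saw, saw, Int.floor_add_one, propext hint]
  push_cast
  ring

theorem saw_of_mem_Ico {x : ℝ} (hx : x ∈ Set.Ico 0 1) :
    saw x = x - 1 / 2 + if x = 0 then 1 / 2 else 0 := by
  have hint : (∃ m : ℤ, (m : ℝ) = x) ↔ x = 0 := by
    refine ⟨fun ⟨m, hm⟩ => ?_, fun hx0 => ⟨0, by simp [hx0]⟩⟩
    have h0 : (0 : ℤ) ≤ m := by exact_mod_cast hm ▸ hx.1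
    have h1 : m < 1 := by exact_mod_cast hm ▸ hx.2
    rw [← hm, show m = 0 by omega, Int.cast_zero]
  simp only [saw, Int.floor_eq_zero_iff.mpr hx, hint, Int.cast_zero, sub_zero]

theorem saw_zero : saw 0 = 0 := by
  simp [saw_of_mem_Ico (Set.left_mem_Ico.mpr one_pos)]

theorem saw_intCast_div_two (c : ℤ) : saw (c / 2) = 0 := by
  have hc : (c : ℝ) / 2 = (c % 2 : ℤ) / 2 + (c / 2 : ℤ) * 1 := by
    rw [mul_one, ← sub_eq_iff_eq_add, div_sub' two_ne_zero, ← Int.cast_ofNat, ← Int.cast_mul,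
      ← Int.cast_sub, ← Int.emod_def]
  rw [hc, saw_periodic.int_mul _ _]
  rcases Int.emod_two_eq_zero_or_one c with h | h <;> rw [h]
  · simpa using saw_zero
  · rw [saw_of_mem_Ico ⟨by norm_num, by norm_num⟩]
    norm_num

theorem sum_saw_add_div_of_mem_Ico {K : ℕ} (hK : K ≠ 0) {y : ℝ} (hy : y ∈ Set.Ico 0 1) :
    ∑ t ∈ range K, saw ((y + t) / K) = saw y := by
  have hKpos : (0 : ℝ) < K := Nat.cast_pos.mpr (Nat.pos_of_ne_zero hK)
  have hmem : ∀ t ∈ range K, (y + t) / K ∈ Set.Ico 0 1 := fun t ht => by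
    have ht' : (t : ℝ) + 1 ≤ K := by exact_mod_cast mem_range.mp ht
    exact ⟨by have := hy.1; positivity, (div_lt_one hKpos).mpr (by linarith [hy.2])⟩
  have hzero : ∀ t : ℕ, (y + t) / K = 0 ↔ t = 0 ∧ y = 0 := fun t => by
    have := hy.1
    rw [div_eq_zero_iff, or_iff_left hKpos.ne']
    constructor
    · intro h
      have : (t : ℝ) = 0 := by linarith [t.cast_nonneg (α := ℝ)]
      exact ⟨by exact_mod_cast this, by linarith⟩
    · rintro ⟨rfl, rfl⟩
      simp
  have hgauss : (∑ t ∈ range K, (t : ℝ)) * 2 = K * (K - 1) := by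
    have := congrArg (Nat.cast : ℕ → ℝ) (sum_range_id_mul_two K)
    push_cast [Nat.one_le_iff_ne_zero.mpr hK] at this
    exact this
  rw [sum_congr rfl fun t ht => saw_of_mem_Ico (hmem t ht), sum_add_distrib, sum_sub_distrib,
    saw_of_mem_Ico hy]
  simp only [hzero, ite_and, sum_ite_eq', mem_range, Nat.pos_of_ne_zero hK, if_true, sum_const,
    card_range, nsmul_eq_mul, ← sum_div, sum_add_distrib]
  field_simp
  linear_combination hgauss

theorem sum_saw_add_div {K : ℕ} (hK : K ≠ 0) (x : ℝ) :
    ∑ t ∈ range K, saw ((x + t) / K) = saw x := by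
  have hK' : (K : ℝ) ≠ 0 := Nat.cast_ne_zero.mpr hK
  set F : ℝ → ℝ := fun x => ∑ t ∈ range K, saw ((x + t) / K)
  have hF : Function.Periodic F 1 := by
    intro x
    set g : ℕ → ℝ := fun t => saw ((x + t) / K)
    have hwrap : g K = g 0 := by
      simp only [g, add_div, div_self hK', Nat.cast_zero, zero_div, add_zero]
      exact saw_periodic _
    have hshift : ∑ t ∈ range K, g (t + 1) = ∑ t ∈ range K, g t := by
      have := sum_range_succ_comm g K
      rw [sum_range_succ', hwrap] at this
      linarith
    convert hshift using 2 with t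
    simp only [g, Nat.cast_succ, add_assoc, add_comm (1 : ℝ)]
  -- both sides are 1-periodic, and on `[0, 1)` no floor is taken
  suffices F (Int.fract x) = saw (Int.fract x) by
    rwa [← Int.self_sub_floor, ← mul_one (⌊x⌋ : ℝ), hF.sub_int_mul_eq,
      saw_periodic.sub_int_mul_eq] at this
  exact sum_saw_add_div_of_mem_Ico hK ⟨Int.fract_nonneg x, Int.fract_lt_one x⟩

theorem bitrev_succ (n j : ℕ) : bitrev (n + 1) j = bitrev n (j / 2) + j % 2 * 2 ^ n := by
  rw [bitrev, sum_range_succ', bitrev]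
  congr 1
  · refine sum_congr rfl fun i _ => ?_
    rw [pow_succ', ← Nat.div_div_eq_div_mul, show n + 1 - 1 - (i + 1) = n - 1 - i by omega]
  · simp

theorem bitrev_succ_of_lt {m j : ℕ} (hj : j < 2 ^ m) : bitrev (m + 1) j = 2 * bitrev m j := by
  rw [bitrev, sum_range_succ, Nat.div_eq_of_lt hj, Nat.zero_mod, zero_mul, add_zero, bitrev,
    mul_sum]
  refine sum_congr rfl fun i hi => ?_
  rw [show m + 1 - 1 - i = m - 1 - i + 1 by have := mem_range.mp hi; omega, pow_succ]
  ring

theorem bitrev_lt (n j : ℕ) : bitrev n j < 2 ^ n := by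
  induction n generalizing j with
  | zero => simp [bitrev]
  | succ n ih =>
    rw [bitrev_succ, pow_succ]
    have := ih (j / 2)
    rcases Nat.mod_two_eq_zero_or_one j with h | h <;> rw [h] <;> omega

theorem bitrev_injOn (n : ℕ) : Set.InjOn (bitrev n) (Set.Iio (2 ^ n)) := by
  induction n with
  | zero => intro j₁ h₁ j₂ h₂ _; simp_all
  | succ n ih =>
    intro j₁ h₁ j₂ h₂ heq
    simp only [Set.mem_Iio, pow_succ] at h₁ h₂
    rw [bitrev_succ, bitrev_succ] at heq
    have hpos : 0 < 2 ^ n := Nat.two_pow_pos n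
    have hbit : j₁ % 2 = j₂ % 2 := by
      have := congrArg (· / 2 ^ n) heq
      simp only [Nat.add_mul_div_right _ _ hpos, Nat.div_eq_of_lt (bitrev_lt _ _)] at this
      simpa using this
    have hhalf : j₁ / 2 = j₂ / 2 := by
      refine ih (by simp only [Set.mem_Iio]; omega) (by simp only [Set.mem_Iio]; omega) ?_
      have := congrArg (· % 2 ^ n) heq
      simp only [Nat.add_mul_mod_self_right, Nat.mod_eq_of_lt (bitrev_lt _ _)] at this
      exact this
    omega

theorem sum_range_comp_bitrev {M : Type*} [AddCommMonoid M] (n : ℕ) (g : ℕ → M) :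
    ∑ j ∈ range (2 ^ n), g (bitrev n j) = ∑ j ∈ range (2 ^ n), g j := by
  have hmaps : Set.MapsTo (bitrev n) (range (2 ^ n)) (range (2 ^ n)) :=
    fun j _ => mem_range.mpr (bitrev_lt n j)
  have hinj : Set.InjOn (bitrev n) (range (2 ^ n)) := by
    rw [coe_range]; exact bitrev_injOn n
  exact sum_nbij (bitrev n) hmaps hinj
    (surjOn_of_injOn_of_card_le _ hmaps hinj le_rfl) fun _ _ => rfl

theorem sum_saw_bitrev_succ_add_div (m : ℕ) (c : ℤ) :
    ∑ j ∈ range (2 ^ m), saw ((bitrev (m + 1) j + c) / 2 ^ (m + 1)) = 0 := by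
  calc ∑ j ∈ range (2 ^ m), saw ((bitrev (m + 1) j + c) / 2 ^ (m + 1))
      = ∑ j ∈ range (2 ^ m), saw ((c / 2 + bitrev m j) / (2 ^ m : ℕ)) :=
        sum_congr rfl fun j hj => by
          rw [bitrev_succ_of_lt (mem_range.mp hj)]
          congr 1
          push_cast
          field_simp
          ring
    _ = ∑ t ∈ range (2 ^ m), saw ((c / 2 + t) / (2 ^ m : ℕ)) :=
        sum_range_comp_bitrev m fun t => saw ((c / 2 + t) / (2 ^ m : ℕ))
    _ = 0 := by rw [sum_saw_add_div (Nat.two_pow_pos m).ne', saw_intCast_div_two]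

theorem saw_half_sum_bitrev (n k : ℕ) (hk : k = 2 ^ n) (b : ℕ) :
    (∑ j ∈ Finset.range (k / 2), saw (((bitrev n j : ℝ) + (b : ℝ)) / (k : ℝ)) = 0)
    ∧ ∑ j ∈ Finset.range (k / 2), saw (((bitrev n j : ℝ) - (b : ℝ)) / (k : ℝ)) = 0 := by
  subst hk
  cases n with
  | zero => simp
  | succ m =>
    rw [pow_succ, Nat.mul_div_cancel _ two_pos, ← pow_succ]
    constructor
    · simpa using sum_saw_bitrev_succ_add_div m b
    · simpa [sub_eq_add_neg] using sum_saw_bitrev_succ_add_div m (-b)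
end

section
/- Let k=2^n and π_n the bit-reversal permutation. Then ∑_{j=0}^{k−1} j²·π_n(j) = k⁴/6 − (20−6n)k³/48 + (8−3n)k²/24 − k/12. -/
/-!
Split `range (2 ^ (n + 1))` into even and odd indices: the lowest bit of `j` becomes the highest
bit of its reversal, so `bitrev (n + 1) (2 * q) = bitrev n q` and
`bitrev (n + 1) (2 * q + 1) = 2 ^ n + bitrev n q`. Hence the moments `∑ j ^ a * bitrev n j` for
`a = 0, 1, 2` satisfy a triangular linear recursion in `n`, with the power sums `∑ q ^ a` as
inhomogeneous terms, and each closed form follows by induction on `n`.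
-/

open Finset

theorem sum_range_two_mul {M : Type*} [AddCommMonoid M] (f : ℕ → M) (m : ℕ) :
    ∑ j ∈ range (2 * m), f j = ∑ q ∈ range m, (f (2 * q) + f (2 * q + 1)) := by
  induction m with
  | zero => simp
  | succ m ih =>
    rw [Nat.mul_succ, sum_range_succ, sum_range_succ, sum_range_succ, ih, add_assoc]

theorem sum_range_id_real (m : ℕ) : ∑ i ∈ range m, (i : ℝ) = m * (m - 1) / 2 := by
  induction m with
  | zero => simp
  | succ m ih => rw [sum_range_succ, ih]; push_cast; ring

theorem sum_range_sq_real (m : ℕ) :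
    ∑ i ∈ range m, (i : ℝ) ^ 2 = m * (m - 1) * (2 * m - 1) / 6 := by
  induction m with
  | zero => simp
  | succ m ih => rw [sum_range_succ, ih]; push_cast; ring

theorem bitrev_two_mul_add (n q : ℕ) {b : ℕ} (hb : b < 2) :
    bitrev (n + 1) (2 * q + b) = b * 2 ^ n + bitrev n q := by
  rw [bitrev, sum_range_succ', add_comm, bitrev]
  have hlow : (2 * q + b) / 2 ^ 0 % 2 = b := by simp [Nat.mod_eq_of_lt hb]
  have hhigh (i : ℕ) : (2 * q + b) / 2 ^ (i + 1) = q / 2 ^ i := by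
    rw [pow_succ', ← Nat.div_div_eq_div_mul, Nat.mul_add_div two_pos, Nat.div_eq_of_lt hb,
      add_zero]
  simp only [hlow, hhigh, Nat.add_sub_cancel, Nat.sub_zero, Nat.sub_sub, Nat.add_comm 1]

theorem sum_range_two_pow_succ_bitrev {M : Type*} [AddCommMonoid M] (g : ℕ → ℕ → M) (n : ℕ) :
    ∑ j ∈ range (2 ^ (n + 1)), g j (bitrev (n + 1) j)
      = ∑ q ∈ range (2 ^ n), (g (2 * q) (bitrev n q) + g (2 * q + 1) (2 ^ n + bitrev n q)) := by
  rw [pow_succ', sum_range_two_mul]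
  refine sum_congr rfl fun q _ => ?_
  have heven : bitrev (n + 1) (2 * q) = bitrev n q := by
    simpa using bitrev_two_mul_add n q two_pos
  have hodd : bitrev (n + 1) (2 * q + 1) = 2 ^ n + bitrev n q := by
    simpa using bitrev_two_mul_add n q one_lt_two
  rw [heven, hodd]

theorem sum_bitrev (n : ℕ) :
    ∑ j ∈ range (2 ^ n), (bitrev n j : ℝ) = 2 ^ n * (2 ^ n - 1) / 2 := by
  induction n with
  | zero => simp [bitrev]
  | succ n ih =>
    rw [sum_range_two_pow_succ_bitrev (fun _ r => (r : ℝ))]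
    push_cast
    rw [sum_add_distrib, sum_add_distrib, sum_const, card_range, nsmul_eq_mul, ih, pow_succ]
    push_cast
    ring

theorem sum_mul_bitrev (n : ℕ) :
    ∑ j ∈ range (2 ^ n), (j : ℝ) * bitrev n j
      = (2 ^ n) ^ 3 / 4 + n * (2 ^ n) ^ 2 / 8 - (2 ^ n) ^ 2 / 2 + 2 ^ n / 4 := by
  induction n with
  | zero => norm_num
  | succ n ih =>
    rw [sum_range_two_pow_succ_bitrev (fun j r => (j : ℝ) * r)]
    have hstep (q : ℕ) :
        ((2 * q : ℕ) : ℝ) * (bitrev n q : ℕ)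
          + ((2 * q + 1 : ℕ) : ℝ) * ((2 ^ n + bitrev n q : ℕ) : ℝ)
        = 4 * ((q : ℝ) * bitrev n q) + bitrev n q + 2 * 2 ^ n * q + 2 ^ n := by
      push_cast; ring
    simp only [hstep, sum_add_distrib, ← mul_sum, sum_const, card_range, nsmul_eq_mul, ih,
      sum_bitrev, sum_range_id_real]
    push_cast
    ring

theorem sum_sq_mul_bitrev (n : ℕ) :
    ∑ j ∈ range (2 ^ n), (j : ℝ) ^ 2 * bitrev n j
      = (2 ^ n) ^ 4 / 6 - (20 - 6 * n) * (2 ^ n) ^ 3 / 48 + (8 - 3 * n) * (2 ^ n) ^ 2 / 24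
        - 2 ^ n / 12 := by
  induction n with
  | zero => norm_num
  | succ n ih =>
    rw [sum_range_two_pow_succ_bitrev (fun j r => (j : ℝ) ^ 2 * r)]
    have hstep (q : ℕ) :
        ((2 * q : ℕ) : ℝ) ^ 2 * (bitrev n q : ℕ)
          + ((2 * q + 1 : ℕ) : ℝ) ^ 2 * ((2 ^ n + bitrev n q : ℕ) : ℝ)
        = 8 * ((q : ℝ) ^ 2 * bitrev n q) + 4 * ((q : ℝ) * bitrev n q) + bitrev n q
          + 4 * 2 ^ n * (q : ℝ) ^ 2 + 4 * 2 ^ n * q + 2 ^ n := by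
      push_cast; ring
    simp only [hstep, sum_add_distrib, ← mul_sum, sum_const, card_range, nsmul_eq_mul, ih,
      sum_mul_bitrev, sum_bitrev, sum_range_id_real, sum_range_sq_real]
    push_cast
    ring

theorem J2_bitrev (n k : ℕ) (hk : k = 2 ^ n) :
    ((∑ j ∈ Finset.range k, j ^ 2 * bitrev n j : ℕ) : ℝ)
      = (k : ℝ) ^ 4 / 6 - (20 - 6 * (n : ℝ)) * (k : ℝ) ^ 3 / 48
        + (8 - 3 * (n : ℝ)) * (k : ℝ) ^ 2 / 24 - (k : ℝ) / 12 := by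
  subst hk
  push_cast
  exact sum_sq_mul_bitrev n
end
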